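/- arXiv:2312.13496 — 2 statements merged into one kernel-verified Lean document; each statement's English description precedes it below -/
import Mathlib

section
/- Let X, Y, H, V be vector fields on a manifold with [X,Y] = −X, [X,H] = −E²V, [X,V] = −H, where E is a function with X(E) = 0, and E > 0 on the region considered. Then for each of the time-dependent vector fields Z ∈ {X, tX + Y, e^{Et}(H + EV), e^{−Et}(H − EV)}, the operator identity [∂_t + X, Z] = 0 holds. Consequently, if f solves the transport equation ∂_t f + Xf = 0, then Zf also solves it. -/
/-!
Regard `∂ₜ + X` and `Z` as the vector fields `T = (1, X)` and `W = (0, Z)` on spacetime `ℝ × M`;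
the commutation identity says exactly that `[T, W] = 0`. For `Z = e^{σEt}(H + σEV)`, `σ = ±1`, it
holds because `XE = 0` and the relations give `[X, H + σEV] = -σE (H + σEV)`. A solution `f` of
the transport equation satisfies `D_T f = 0`, and for `C²` functions `D_{[T,W]} = D_T D_W - D_W D_T`
(symmetry of the second derivative), so `D_T (D_W f) = D_W (D_T f) = 0`.
-/

open Real VectorField

section

variable {M : Type*} [NormedAddCommGroup M] [NormedSpace ℝ M]
  {F : Type*} [NormedAddCommGroup F] [NormedSpace ℝ F]

lemma DifferentiableAt.fderiv_apply_zero_prodMk {φ : ℝ × M → F} {t : ℝ} {x : M}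
    (hφ : DifferentiableAt ℝ φ (t, x)) (v : M) :
    fderiv ℝ φ (t, x) (0, v) = fderiv ℝ (fun y ↦ φ (t, y)) x v := by
  rw [HasFDerivAt.fderiv (f := fun y ↦ φ (t, y))
    (hφ.hasFDerivAt.comp x (hasFDerivAt_prodMk_right t x))]
  simp

lemma DifferentiableAt.fderiv_apply_one_prodMk {φ : ℝ × M → F} {t : ℝ} {x : M}
    (hφ : DifferentiableAt ℝ φ (t, x)) (v : M) :
    fderiv ℝ φ (t, x) (1, v) = deriv (fun s ↦ φ (s, x)) t + fderiv ℝ (fun y ↦ φ (t, y)) x v := by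
  have hdt : HasDerivAt (fun s ↦ φ (s, x)) (fderiv ℝ φ (t, x) (1, 0)) t :=
    hφ.hasFDerivAt.comp_hasDerivAt t ((hasDerivAt_id t).prodMk (hasDerivAt_const t x))
  rw [hdt.deriv, ← hφ.fderiv_apply_zero_prodMk, ← map_add, Prod.mk_add_mk, add_zero, zero_add]

/-- `[∂ₜ + X, Z] = 0` for a time-dependent field `Z` on `M`, i.e. one without `∂ₜ` component. -/
def CommutesWithTransport (X : M → M) (Z : ℝ → M → M) : Prop :=
  ∀ t x, deriv (fun s ↦ Z s x) t + lieBracket ℝ X (Z t) x = 0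

def SolvesTransport (X : M → M) (f : ℝ → M → F) : Prop :=
  ∀ t x, deriv (fun s ↦ f s x) t + fderiv ℝ (f t) x (X x) = 0

lemma lieBracket_prodMk_one_zero {X : M → M} {Z : ℝ → M → M} {t : ℝ} {x : M}
    (hX : DifferentiableAt ℝ X x) (hZ : DifferentiableAt ℝ (fun p : ℝ × M ↦ Z p.1 p.2) (t, x)) :
    lieBracket ℝ (fun q : ℝ × M ↦ ((1 : ℝ), X q.2)) (fun q ↦ ((0 : ℝ), Z q.1 q.2)) (t, x) =
      (0, deriv (fun s ↦ Z s x) t + lieBracket ℝ X (Z t) x) := by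
  have hT : HasFDerivAt (fun q : ℝ × M ↦ ((1 : ℝ), X q.2))
      ((0 : ℝ × M →L[ℝ] ℝ).prod ((fderiv ℝ X x).comp (ContinuousLinearMap.snd ℝ ℝ M))) (t, x) :=
    (hasFDerivAt_const _ _).prodMk (hX.hasFDerivAt.comp (t, x) hasFDerivAt_snd)
  have hW : HasFDerivAt (fun q : ℝ × M ↦ ((0 : ℝ), Z q.1 q.2))
      ((0 : ℝ × M →L[ℝ] ℝ).prod (fderiv ℝ (fun p : ℝ × M ↦ Z p.1 p.2) (t, x))) (t, x) :=
    (hasFDerivAt_const _ _).prodMk hZ.hasFDerivAt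
  simp only [lieBracket, hT.fderiv, hW.fderiv]
  simp [hZ.fderiv_apply_one_prodMk, add_sub_assoc]

lemma CommutesWithTransport.solvesTransport_fderiv_apply {X : M → M} {Z : ℝ → M → M}
    {f : ℝ → M → F} (hZ : CommutesWithTransport X Z) (hX : Differentiable ℝ X)
    (hZd : Differentiable ℝ (fun p : ℝ × M ↦ Z p.1 p.2))
    (hf : ContDiff ℝ 2 (fun p : ℝ × M ↦ f p.1 p.2)) (htr : SolvesTransport X f) :
    SolvesTransport X (fun t y ↦ fderiv ℝ (f t) y (Z t y)) := by
  intro t x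
  set g : ℝ × M → F := fun p ↦ f p.1 p.2
  have hgd : Differentiable ℝ g := hf.differentiable (by norm_num)
  have hdg : Differentiable ℝ (fderiv ℝ g) := (hf.fderiv_right le_rfl).differentiable one_ne_zero
  set T : ℝ × M → ℝ × M := fun q ↦ (1, X q.2)
  set W : ℝ × M → ℝ × M := fun q ↦ (0, Z q.1 q.2)
  have hT : Differentiable ℝ T := (differentiable_const _).prodMk (hX.comp differentiable_snd)
  have hW : Differentiable ℝ W := (differentiable_const _).prodMk hZd
  have hgT : (fun q ↦ fderiv ℝ g q (T q)) = 0 := by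
    ext ⟨s, y⟩ : 1
    exact ((hgd _).fderiv_apply_one_prodMk _).trans (htr s y)
  have hTW : lieBracket ℝ T W (t, x) = 0 := by
    rw [lieBracket_prodMk_one_zero (hX x) (hZd _), hZ t x, Prod.mk_zero_zero]
  have key := fderiv_apply_lieBracket hf.contDiffAt (by simp) (hW (t, x)) (hT (t, x))
  rw [hTW, map_zero, hgT] at key
  have hpartial : ∀ s y v, fderiv ℝ g (s, y) (0, v) = fderiv ℝ (f s) y v :=
    fun s y v ↦ (hgd (s, y)).fderiv_apply_zero_prodMk v
  have hgW : DifferentiableAt ℝ (fun q ↦ fderiv ℝ g q (W q)) (t, x) :=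
    (hdg (t, x)).clm_apply (hW (t, x))
  simp only [fderiv_zero, Pi.zero_apply, zero_apply, sub_zero] at key
  rw [show T (t, x) = (1, X x) from rfl, hgW.fderiv_apply_one_prodMk] at key
  simpa only [T, W, hpartial] using key.symm

lemma commutesWithTransport_self (X : M → M) : CommutesWithTransport X (fun _ ↦ X) := by
  simp [CommutesWithTransport]

lemma commutesWithTransport_smul_add {X Y : M → M} (hX : Differentiable ℝ X)
    (hY : Differentiable ℝ Y) (hXY : ∀ x, lieBracket ℝ X Y x = -X x) :
    CommutesWithTransport X (fun t x ↦ t • X x + Y x) := by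
  intro t x
  have hd : HasDerivAt (fun s : ℝ ↦ s • X x + Y x) (X x) t := by
    simpa using ((hasDerivAt_id t).smul_const (X x)).add_const (Y x)
  change deriv _ t + lieBracket ℝ X (t • X + Y) x = 0
  rw [hd.deriv, lieBracket_add_right ((hX x).const_smul t) (hY x),
    lieBracket_const_smul_right (hX x), lieBracket_self, hXY x]
  simp

lemma commutesWithTransport_exp_smul {X W : M → M} {a : M → ℝ} (ha : Differentiable ℝ a)
    (hW : Differentiable ℝ W) (hXa : ∀ x, fderiv ℝ a x (X x) = 0)
    (hXW : ∀ x, lieBracket ℝ X W x = -a x • W x) :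
    CommutesWithTransport X (fun t x ↦ exp (a x * t) • W x) := by
  intro t x
  have hd : HasDerivAt (fun s ↦ exp (a x * s) • W x) ((exp (a x * t) * a x) • W x) t := by
    simpa using (((hasDerivAt_id t).const_mul (a x)).exp).smul_const (W x)
  have hexp : HasFDerivAt (fun y ↦ exp (a y * t)) (exp (a x * t) • t • fderiv ℝ a x) x := by
    simpa [mul_comm] using ((ha x).hasFDerivAt.mul_const t).exp
  rw [hd.deriv, lieBracket_smul_right hexp.differentiableAt (hW x), hexp.fderiv, hXW x]
  simp [hXa x]
  module

lemma lieBracket_add_smul_eq_neg_smul {X H V : M → M} {E : M → ℝ} {σ : ℝ} {x : M}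
    (hσ : σ ^ 2 = 1) (hH : DifferentiableAt ℝ H x) (hV : DifferentiableAt ℝ V x)
    (hE : DifferentiableAt ℝ E x) (hXE : fderiv ℝ E x (X x) = 0)
    (hXH : lieBracket ℝ X H x = -(E x ^ 2) • V x) (hXV : lieBracket ℝ X V x = -H x) :
    lieBracket ℝ X (fun y ↦ H y + (σ * E y) • V y) x =
      -(σ * E x) • (H x + (σ * E x) • V x) := by
  have hσE : DifferentiableAt ℝ (fun y ↦ σ * E y) x := hE.const_mul σ
  rw [show (fun y ↦ H y + (σ * E y) • V y) = H + fun y ↦ (σ * E y) • V y from rfl,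
    lieBracket_add_right (W₁ := fun y ↦ (σ * E y) • V y) hH (hσE.smul hV),
    lieBracket_smul_right hσE hV, fderiv_const_mul hE, hXH, hXV]
  simp only [smul_apply, hXE, smul_zero, zero_smul, zero_add]
  linear_combination (norm := module) hσ • (E x ^ 2 • V x)

lemma commutesWithTransport_exp_smul_add_smul {X H V : M → M} {E : M → ℝ} {σ : ℝ}
    (hσ : σ ^ 2 = 1) (hH : Differentiable ℝ H) (hV : Differentiable ℝ V)
    (hE : Differentiable ℝ E) (hXE : ∀ x, fderiv ℝ E x (X x) = 0)
    (hXH : ∀ x, lieBracket ℝ X H x = -(E x ^ 2) • V x) (hXV : ∀ x, lieBracket ℝ X V x = -H x) :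
    CommutesWithTransport X (fun t x ↦ exp (σ * E x * t) • (H x + (σ * E x) • V x)) :=
  commutesWithTransport_exp_smul (hE.const_mul σ) (hH.add ((hE.const_mul σ).smul hV))
    (fun x ↦ by simp [fderiv_const_mul (hE x), hXE x])
    (fun x ↦ lieBracket_add_smul_eq_neg_smul hσ (hH x) (hV x) (hE x) (hXE x) (hXH x) (hXV x))

end

theorem stmt11_general {M : Type*} [NormedAddCommGroup M] [NormedSpace ℝ M]
    (X Y H V : M → M) (E : M → ℝ)
    (hXs : ContDiff ℝ 2 X) (hYs : ContDiff ℝ 2 Y) (hHs : ContDiff ℝ 2 H)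
    (hVs : ContDiff ℝ 2 V) (hEs : ContDiff ℝ 2 E)
    (hXE : ∀ x, fderiv ℝ E x (X x) = 0)
    (hXY : ∀ x, fderiv ℝ Y x (X x) - fderiv ℝ X x (Y x) = -X x)
    (hXH : ∀ x, fderiv ℝ H x (X x) - fderiv ℝ X x (H x) = -((E x) ^ 2) • V x)
    (hXV : ∀ x, fderiv ℝ V x (X x) - fderiv ℝ X x (V x) = -H x)
    (Z : ℝ → M → M)
    (hZ : Z = (fun _ x => X x) ∨ Z = (fun t x => t • X x + Y x) ∨
          Z = (fun t x => Real.exp (E x * t) • (H x + E x • V x)) ∨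
          Z = (fun t x => Real.exp (-(E x * t)) • (H x - E x • V x))) :
    (∀ t x, deriv (fun s => Z s x) t
        + (fderiv ℝ (Z t) x (X x) - fderiv ℝ X x (Z t x)) = 0) ∧
    ∀ f : ℝ → M → ℝ, ContDiff ℝ 2 (fun p : ℝ × M => f p.1 p.2) →
      (∀ t x, deriv (fun s => f s x) t + fderiv ℝ (f t) x (X x) = 0) →
      (∀ t x, deriv (fun s => fderiv ℝ (f s) x (Z s x)) t
          + fderiv ℝ (fun y => fderiv ℝ (f t) y (Z t y)) x (X x) = 0) := by
  have hX : Differentiable ℝ X := hXs.differentiable (by norm_num)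
  have hY : Differentiable ℝ Y := hYs.differentiable (by norm_num)
  have hH : Differentiable ℝ H := hHs.differentiable (by norm_num)
  have hV : Differentiable ℝ V := hVs.differentiable (by norm_num)
  have hE : Differentiable ℝ E := hEs.differentiable (by norm_num)
  have hZc : CommutesWithTransport X Z := by
    rcases hZ with rfl | rfl | rfl | rfl
    · exact commutesWithTransport_self X
    · exact commutesWithTransport_smul_add hX hY hXY
    · simpa only [one_mul] using
        commutesWithTransport_exp_smul_add_smul (one_pow 2) hH hV hE hXE hXH hXV
    · simpa only [neg_mul, one_mul, neg_smul, ← sub_eq_add_neg] using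
        commutesWithTransport_exp_smul_add_smul (σ := -1) (by norm_num) hH hV hE hXE hXH hXV
  have hZd : Differentiable ℝ (fun p : ℝ × M ↦ Z p.1 p.2) := by
    rcases hZ with rfl | rfl | rfl | rfl <;> fun_prop
  exact ⟨hZc, fun f hf htr ↦ hZc.solvesTransport_fderiv_apply hX hZd hf htr⟩

/-- Abstract commuting vector fields for the Vlasov equation on hyperbolic space:
if `[X,Y] = -X`, `[X,H] = -E² V`, `[X,V] = -H` and `XE = 0`, then each of the
time-dependent fields `X`, `tX + Y`, `e^{Et}(H + EV)`, `e^{-Et}(H - EV)` satisfies the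
operator identity `[∂ₜ + X, Z] = 0`, and consequently applying `Z` to a solution of the
transport equation `∂ₜ f + Xf = 0` yields another solution. -/
theorem stmt11 {M : Type*} [NormedAddCommGroup M] [NormedSpace ℝ M]
    (X Y H V : M → M) (E : M → ℝ)
    (hXs : ContDiff ℝ 2 X) (hYs : ContDiff ℝ 2 Y) (hHs : ContDiff ℝ 2 H)
    (hVs : ContDiff ℝ 2 V) (hEs : ContDiff ℝ 2 E)
    (hEpos : ∀ x, 0 < E x)
    (hXE : ∀ x, fderiv ℝ E x (X x) = 0)
    (hXY : ∀ x, fderiv ℝ Y x (X x) - fderiv ℝ X x (Y x) = -X x)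
    (hXH : ∀ x, fderiv ℝ H x (X x) - fderiv ℝ X x (H x) = -((E x) ^ 2) • V x)
    (hXV : ∀ x, fderiv ℝ V x (X x) - fderiv ℝ X x (V x) = -H x)
    (Z : ℝ → M → M)
    (hZ : Z = (fun _ x => X x) ∨ Z = (fun t x => t • X x + Y x) ∨
          Z = (fun t x => Real.exp (E x * t) • (H x + E x • V x)) ∨
          Z = (fun t x => Real.exp (-(E x * t)) • (H x - E x • V x))) :
    (∀ t x, deriv (fun s => Z s x) t
        + (fderiv ℝ (Z t) x (X x) - fderiv ℝ X x (Z t x)) = 0) ∧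
    ∀ f : ℝ → M → ℝ, ContDiff ℝ 2 (fun p : ℝ × M => f p.1 p.2) →
      (∀ t x, deriv (fun s => f s x) t + fderiv ℝ (f t) x (X x) = 0) →
      (∀ t x, deriv (fun s => fderiv ℝ (f s) x (Z s x)) t
          + fderiv ℝ (fun y => fderiv ℝ (f t) y (Z t y)) x (X x) = 0) :=
  stmt11_general X Y H V E hXs hYs hHs hVs hEs hXE hXY hXH hXV Z hZ
end

section
/- Let X, Y, H, V be vector fields with [X,Y] = −X, [X,H] = K·E²·V, [X,V] = −H, where E, K are functions with X(E) = 0, and let q satisfy the Riccati equation X(q) + q² + E²·K = 0. Then [X, H + qV] = −q·(H + qV). -/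
open VectorField

section LieBracket

variable {𝕜 : Type*} [NontriviallyNormedField 𝕜] {E : Type*} [NormedAddCommGroup E]
  [NormedSpace 𝕜 E] {X H V : E → E} {q : E → 𝕜} {x : E}

theorem lieBracket_add_smul_right (hH : DifferentiableAt 𝕜 H x) (hV : DifferentiableAt 𝕜 V x)
    (hq : DifferentiableAt 𝕜 q x) :
    lieBracket 𝕜 X (fun y ↦ H y + q y • V y) x =
      lieBracket 𝕜 X H x + fderiv 𝕜 q x (X x) • V x + q x • lieBracket 𝕜 X V x := by
  rw [show (fun y ↦ H y + q y • V y) = H + fun y ↦ q y • V y from rfl,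
    lieBracket_add_right hH (hq.fun_smul hV), lieBracket_smul_right hq hV, add_assoc]

/-- With `c = E² K`, the Riccati equation `Xq = -q² - c` is exactly what makes the `V`-component
of `[X, H + qV] = cV + (Xq) V - qH` equal to `-q²`. -/
theorem lieBracket_add_smul_eq_neg_smul_of_riccati (c : E → 𝕜) (hH : DifferentiableAt 𝕜 H x)
    (hV : DifferentiableAt 𝕜 V x) (hq : DifferentiableAt 𝕜 q x)
    (hXH : lieBracket 𝕜 X H x = c x • V x) (hXV : lieBracket 𝕜 X V x = -H x)
    (hRic : fderiv 𝕜 q x (X x) + q x ^ 2 + c x = 0) :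
    lieBracket 𝕜 X (fun y ↦ H y + q y • V y) x = -q x • (H x + q x • V x) := by
  have hXq : fderiv 𝕜 q x (X x) = -(q x ^ 2 + c x) := by linear_combination hRic
  rw [lieBracket_add_smul_right hH hV hq, hXH, hXV, hXq]
  module

end LieBracket

theorem stmt12_general {M : Type*} [NormedAddCommGroup M] [NormedSpace ℝ M]
    (X H V : M → M) (E K q : M → ℝ)
    (hHs : ContDiff ℝ 2 H)
    (hVs : ContDiff ℝ 2 V) (hqs : ContDiff ℝ 2 q)
    (hXH : ∀ x, fderiv ℝ H x (X x) - fderiv ℝ X x (H x) = (K x * (E x) ^ 2) • V x)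
    (hXV : ∀ x, fderiv ℝ V x (X x) - fderiv ℝ X x (V x) = -H x)
    (hRic : ∀ x, fderiv ℝ q x (X x) + (q x) ^ 2 + (E x) ^ 2 * K x = 0) :
    ∀ x, fderiv ℝ (fun y => H y + q y • V y) x (X x)
        - fderiv ℝ X x (H x + q x • V x)
        = (-(q x)) • (H x + q x • V x) := by
  intro x
  have hRic' : fderiv ℝ q x (X x) + q x ^ 2 + K x * E x ^ 2 = 0 := by
    linear_combination hRic x
  exact lieBracket_add_smul_eq_neg_smul_of_riccati (fun y ↦ K y * E y ^ 2)
    (hHs.differentiable two_ne_zero x) (hVs.differentiable two_ne_zero x)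
    (hqs.differentiable two_ne_zero x) (hXH x) (hXV x) hRic'

/-- On a negatively curved surface, a solution `q` of the Riccati equation
`Xq + q² + E² K = 0` defines an eigendirection of `ad_X`: `[X, H + qV] = -q (H + qV)`,
given `[X,Y] = -X`, `[X,H] = K E² V`, `[X,V] = -H` and `XE = 0`. -/
theorem stmt12 {M : Type*} [NormedAddCommGroup M] [NormedSpace ℝ M]
    (X Y H V : M → M) (E K q : M → ℝ)
    (hXs : ContDiff ℝ 2 X) (hYs : ContDiff ℝ 2 Y) (hHs : ContDiff ℝ 2 H)
    (hVs : ContDiff ℝ 2 V) (hEs : ContDiff ℝ 2 E) (hqs : ContDiff ℝ 2 q)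
    (hXE : ∀ x, fderiv ℝ E x (X x) = 0)
    (hXY : ∀ x, fderiv ℝ Y x (X x) - fderiv ℝ X x (Y x) = -X x)
    (hXH : ∀ x, fderiv ℝ H x (X x) - fderiv ℝ X x (H x) = (K x * (E x) ^ 2) • V x)
    (hXV : ∀ x, fderiv ℝ V x (X x) - fderiv ℝ X x (V x) = -H x)
    (hRic : ∀ x, fderiv ℝ q x (X x) + (q x) ^ 2 + (E x) ^ 2 * K x = 0) :
    ∀ x, fderiv ℝ (fun y => H y + q y • V y) x (X x)
        - fderiv ℝ X x (H x + q x • V x)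
        = (-(q x)) • (H x + q x • V x) :=
  stmt12_general X H V E K q hHs hVs hqs hXH hXV hRic
end
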